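/- The quantile projection operator Π^λ : P(ℝ)^X → P(ℝ)^X is a non-expansion with respect to w̄_∞: for any η, η' ∈ P(ℝ)^X and any λ ∈ [0,1]^{X×[m]}, w̄_∞(Π^λ η, Π^λ η') ≤ w̄_∞(η, η') (as an inequality in [0,∞]). -/

import Mathlib

open MeasureTheory ProbabilityTheory Set
open scoped ENNReal

/-- Generalized inverse CDF (least τ-quantile). -/
noncomputable def invCDF (ν : Measure ℝ) (τ : ℝ) : ℝ := sInf {y | τ ≤ cdf ν y}

/-- Upper inverse CDF (greatest τ-quantile). -/
noncomputable def upInvCDF (ν : Measure ℝ) (τ : ℝ) : ℝ := sInf {y | τ < cdf ν y}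

/-- Quantile level τ_i = (2i-1)/(2m), with `i : Fin m` zero-indexed. -/
noncomputable def qlevel (m : ℕ) (i : Fin m) : ℝ := (2 * (i : ℝ) + 1) / (2 * m)

/-- The uniform m-atom distribution with the given particle locations. -/
noncomputable def paramDistOne {m : ℕ} (θ : Fin m → ℝ) : Measure ℝ :=
  (m : ℝ≥0∞)⁻¹ • ∑ i : Fin m, Measure.dirac (θ i)

/-- Return-distribution function associated with quantile parameters θ. -/
noncomputable def paramDist {X : Type*} {m : ℕ} (θ : X → Fin m → ℝ) : X → Measure ℝ :=
  fun x => paramDistOne (θ x)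

/-- The distributional Bellman operator T^π. -/
noncomputable def bellman {X : Type*} [MeasurableSpace X]
    (P : X → Measure (ℝ × X)) (γ : ℝ) (η : X → Measure ℝ) : X → Measure ℝ :=
  fun x => (P x).bind (fun p => (η p.2).map (fun z => p.1 + γ * z))

/-- The quantile projection Π^λ, parameter-level output. -/
noncomputable def projParam {X : Type*} {m : ℕ} (lam : X → Fin m → ℝ)
    (η : X → Measure ℝ) : X → Fin m → ℝ :=
  fun x i => (1 - lam x i) * invCDF (η x) (qlevel m i) + lam x i * upInvCDF (η x) (qlevel m i)

/-- The quantile projection Π^λ on return-distribution functions. -/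
noncomputable def proj {X : Type*} {m : ℕ} (lam : X → Fin m → ℝ)
    (η : X → Measure ℝ) : X → Measure ℝ :=
  paramDist (projParam lam η)

/-- The projected distributional Bellman operator Π^λ T^π acting on parameters. -/
noncomputable def projBellmanParam {X : Type*} [MeasurableSpace X]
    (P : X → Measure (ℝ × X)) (γ : ℝ) {m : ℕ} (lam : X → Fin m → ℝ)
    (θ : X → Fin m → ℝ) : X → Fin m → ℝ :=
  projParam lam (bellman P γ (paramDist θ))

/-- The cube [0,1]^{X×[m]} of interpolation parameters. -/
def unitCube (X : Type*) (m : ℕ) : Set (X → Fin m → ℝ) :=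
  {lam | ∀ x i, lam x i ∈ Set.Icc (0:ℝ) 1}

/-- Wasserstein-∞ distance (valued in [0,∞]). -/
noncomputable def winf (ν ν' : Measure ℝ) : ℝ≥0∞ :=
  ⨆ t : Set.Ioo (0:ℝ) 1, ENNReal.ofReal |invCDF ν t - invCDF ν' t|

/-- Extension of w∞ to return-distribution functions: max over states. -/
noncomputable def wbar {X : Type*} (η η' : X → Measure ℝ) : ℝ≥0∞ :=
  ⨆ x : X, winf (η x) (η' x)

/-- Wasserstein-1 distance between probability distributions on ℝ. -/
noncomputable def w1 (ν ν' : Measure ℝ) : ℝ :=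
  ∫ t in Set.Ioo (0:ℝ) 1, |invCDF ν t - invCDF ν' t|

/-- Uniform m-atom distributions. -/
noncomputable def FQ (m : ℕ) : Set (Measure ℝ) :=
  {ν | ∃ z : Fin m → ℝ, ν = paramDistOne z}


/-! Both projected distributions have atoms that are sorted in `i` (the `i`-th atom lies between the
lower and upper `τ_i`-quantile), so their `t`-quantiles are the atoms with the same index. It then
suffices that the lower and the upper quantiles of `η x` and `η' x` at the level `τ_i` each differ by
at most `w_∞(η x, η' x)`: for the lower ones this is the definition, and the upper quantile at `τ` is
the limit of the lower quantiles at levels `s ↓ τ`. -/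

section Quantiles

variable (ν : Measure ℝ)

lemma bddBelow_setOf_le_cdf {τ : ℝ} (hτ : 0 < τ) : BddBelow {y | τ ≤ cdf ν y} := by
  obtain ⟨y₀, hy₀⟩ := ((tendsto_cdf_atBot ν).eventually (eventually_lt_nhds hτ)).exists
  exact ⟨y₀, fun z hz => ((monotone_cdf ν).reflect_lt (hy₀.trans_le hz)).le⟩

lemma nonempty_setOf_lt_cdf {τ : ℝ} (hτ : τ < 1) : {y | τ < cdf ν y}.Nonempty :=
  ((tendsto_cdf_atTop ν).eventually (eventually_gt_nhds hτ)).exists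

lemma setOf_lt_cdf_subset (τ : ℝ) : {y | τ < cdf ν y} ⊆ {y | τ ≤ cdf ν y} :=
  fun _ hy => le_of_lt (α := ℝ) hy

lemma invCDF_le_of_le_cdf {τ y : ℝ} (hτ : 0 < τ) (hy : τ ≤ cdf ν y) : invCDF ν τ ≤ y :=
  csInf_le (bddBelow_setOf_le_cdf ν hτ) hy

lemma invCDF_le_upInvCDF {τ : ℝ} (hτ : τ ∈ Ioo 0 1) : invCDF ν τ ≤ upInvCDF ν τ :=
  csInf_le_csInf (bddBelow_setOf_le_cdf ν hτ.1) (nonempty_setOf_lt_cdf ν hτ.2)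
    (setOf_lt_cdf_subset ν τ)

lemma upInvCDF_le_invCDF_of_lt {τ τ' : ℝ} (hτ : 0 < τ) (hττ' : τ < τ') (hτ' : τ' < 1) :
    upInvCDF ν τ ≤ invCDF ν τ' :=
  csInf_le_csInf ((bddBelow_setOf_le_cdf ν hτ).mono (setOf_lt_cdf_subset ν τ))
    ((nonempty_setOf_lt_cdf ν hτ').mono (setOf_lt_cdf_subset ν τ'))
    (fun _ hy => hττ'.trans_le hy)

end Quantiles

lemma upInvCDF_le_upInvCDF_add (ν ν' : Measure ℝ) {τ c : ℝ} (hτ : τ ∈ Ioo 0 1)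
    (h : ∀ s ∈ Ioo (0 : ℝ) 1, invCDF ν s ≤ invCDF ν' s + c) :
    upInvCDF ν τ ≤ upInvCDF ν' τ + c := by
  suffices upInvCDF ν τ - c ≤ upInvCDF ν' τ by linarith
  refine le_csInf (nonempty_setOf_lt_cdf ν' hτ.2) fun y (hy : τ < cdf ν' y) => ?_
  obtain ⟨s, hτs, hs⟩ := exists_between (lt_min hy hτ.2)
  have hs₀ : 0 < s := hτ.1.trans hτs
  have hs₁ : s < 1 := hs.trans_le (min_le_right _ _)
  have hy' : invCDF ν' s ≤ y := invCDF_le_of_le_cdf ν' hs₀ (hs.le.trans (min_le_left _ _))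
  linarith [upInvCDF_le_invCDF_of_lt ν hτ.1 hτs hs₁, h s ⟨hs₀, hs₁⟩]

lemma abs_upInvCDF_sub_le (ν ν' : Measure ℝ) {τ c : ℝ} (hτ : τ ∈ Ioo 0 1)
    (h : ∀ s ∈ Ioo (0 : ℝ) 1, |invCDF ν s - invCDF ν' s| ≤ c) :
    |upInvCDF ν τ - upInvCDF ν' τ| ≤ c := by
  rw [abs_sub_le_iff]
  constructor
  · linarith [upInvCDF_le_upInvCDF_add ν ν' hτ fun s hs => by linarith [abs_le.1 (h s hs)]]
  · linarith [upInvCDF_le_upInvCDF_add ν' ν hτ fun s hs => by linarith [abs_le.1 (h s hs)]]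

lemma mem_Icc_interp {l a b : ℝ} (hl : l ∈ Icc 0 1) (hab : a ≤ b) :
    (1 - l) * a + l * b ∈ Icc a b :=
  ⟨by nlinarith [hl.1], by nlinarith [hl.2]⟩

lemma abs_interp_sub_interp_le {l a b a' b' c : ℝ} (hl : l ∈ Icc 0 1)
    (ha : |a - a'| ≤ c) (hb : |b - b'| ≤ c) :
    |((1 - l) * a + l * b) - ((1 - l) * a' + l * b')| ≤ c := by
  have hl' : 0 ≤ 1 - l := sub_nonneg.2 hl.2
  calc |((1 - l) * a + l * b) - ((1 - l) * a' + l * b')|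
      = |(1 - l) * (a - a') + l * (b - b')| := by congr 1; ring
    _ ≤ (1 - l) * |a - a'| + l * |b - b'| := by
        refine (abs_add_le _ _).trans_eq ?_
        rw [abs_mul, abs_mul, abs_of_nonneg hl', abs_of_nonneg hl.1]
    _ ≤ (1 - l) * c + l * c := by gcongr; exact hl.1
    _ = c := by ring

lemma monotone_interp_invCDF_upInvCDF (ν : Measure ℝ) {ι : Type*} [PartialOrder ι]
    {τ : ι → ℝ} (hτ : StrictMono τ) (hτ₀₁ : ∀ i, τ i ∈ Ioo 0 1) {l : ι → ℝ}
    (hl : ∀ i, l i ∈ Icc 0 1) :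
    Monotone fun i => (1 - l i) * invCDF ν (τ i) + l i * upInvCDF ν (τ i) := by
  intro i j hij
  rcases hij.eq_or_lt with rfl | hij
  · rfl
  calc (1 - l i) * invCDF ν (τ i) + l i * upInvCDF ν (τ i)
      ≤ upInvCDF ν (τ i) := (mem_Icc_interp (hl i) (invCDF_le_upInvCDF ν (hτ₀₁ i))).2
    _ ≤ invCDF ν (τ j) := upInvCDF_le_invCDF_of_lt ν (hτ₀₁ i).1 (hτ hij) (hτ₀₁ j).2
    _ ≤ (1 - l j) * invCDF ν (τ j) + l j * upInvCDF ν (τ j) :=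
        (mem_Icc_interp (hl j) (invCDF_le_upInvCDF ν (hτ₀₁ j))).1

lemma qlevel_mem_Ioo {m : ℕ} (i : Fin m) : qlevel m i ∈ Ioo (0 : ℝ) 1 := by
  have hi : (i : ℝ) + 1 ≤ m := by exact_mod_cast i.isLt
  have hm : (0 : ℝ) < 2 * m := by linarith
  exact ⟨div_pos (by positivity) hm, (div_lt_one hm).2 (by linarith)⟩

lemma qlevel_strictMono (m : ℕ) : StrictMono (qlevel m) := by
  intro i j hij
  have hm : (0 : ℝ) < 2 * m := by
    have : (0 : ℝ) < m := by exact_mod_cast j.pos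
    linarith
  have : (i : ℝ) < j := by exact_mod_cast hij
  rw [qlevel, qlevel, div_lt_div_iff_of_pos_right hm]
  linarith

section Atoms

open scoped Finset

lemma cdf_paramDistOne {m : ℕ} (hm : 0 < m) (θ : Fin m → ℝ) (y : ℝ) :
    cdf (paramDistOne θ) y = #{i | θ i ≤ y} / m := by
  have : IsProbabilityMeasure (paramDistOne θ) := by
    constructor
    simp [paramDistOne, ENNReal.inv_mul_cancel (Nat.cast_ne_zero.2 hm.ne')]
  have hIic : paramDistOne θ (Iic y) = (m : ℝ≥0∞)⁻¹ * #{i | θ i ≤ y} := by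
    simp only [paramDistOne, Measure.smul_apply, Measure.coe_finsetSum, Finset.sum_apply,
      smul_eq_mul, Measure.dirac_apply' _ measurableSet_Iic, indicator_apply, mem_Iic,
      Pi.one_apply, Finset.sum_boole]
  rw [cdf_eq_real, measureReal_def, hIic, ENNReal.toReal_mul, ENNReal.toReal_inv]
  simp [div_eq_inv_mul]

/-- The atom of a sorted `m`-atom distribution that carries its `t`-quantile. -/
noncomputable def quantileIndex (m : ℕ) (t : ℝ) : ℕ := ⌈t * m⌉₊ - 1

lemma quantileIndex_spec {m : ℕ} {t : ℝ} (hm : 0 < m) (ht : t ∈ Ioo 0 1) :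
    quantileIndex m t < m ∧ (quantileIndex m t : ℝ) < t * m ∧ t * m ≤ quantileIndex m t + 1 := by
  have hm' : (0 : ℝ) < m := by exact_mod_cast hm
  have htm : 0 < t * m := mul_pos ht.1 hm'
  have hcast : (quantileIndex m t : ℝ) = ⌈t * m⌉₊ - 1 := by
    rw [quantileIndex, Nat.cast_sub (Nat.ceil_pos.2 htm), Nat.cast_one]
  have hle := Nat.le_ceil (t * m)
  have hlt := Nat.ceil_lt_add_one htm.le
  have hidx : (quantileIndex m t : ℝ) < m := by nlinarith [ht.2]
  exact ⟨by exact_mod_cast hidx, by linarith, by linarith⟩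

lemma invCDF_paramDistOne {m : ℕ} (hm : 0 < m) {θ : Fin m → ℝ} (hθ : Monotone θ)
    {t : ℝ} (ht : t ∈ Ioo 0 1) :
    invCDF (paramDistOne θ) t = θ ⟨quantileIndex m t, (quantileIndex_spec hm ht).1⟩ := by
  obtain ⟨hkm, hk_lt, hk_le⟩ := quantileIndex_spec hm ht
  set k : Fin m := ⟨quantileIndex m t, hkm⟩
  have hm' : (0 : ℝ) < m := by exact_mod_cast hm
  refine IsLeast.csInf_eq ⟨?_, fun y (hy : t ≤ _) => ?_⟩
  · have hcard : Finset.Iic k ⊆ ({i | θ i ≤ θ k} : Finset (Fin m)) := fun i hi => by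
      simpa using hθ (Finset.mem_Iic.1 hi)
    have := Finset.card_le_card hcard
    rw [Fin.card_Iic] at this
    change t ≤ _
    rw [cdf_paramDistOne hm, le_div_iff₀ hm']
    calc t * m ≤ quantileIndex m t + 1 := hk_le
      _ ≤ _ := by exact_mod_cast this
  · by_contra! hyk
    have hcard : ({i | θ i ≤ y} : Finset (Fin m)) ⊆ Finset.Iio k := fun i hi => by
      simp only [Finset.mem_filter, Finset.mem_univ, true_and] at hi
      exact Finset.mem_Iio.2 (lt_of_not_ge fun hki => (hi.trans_lt hyk).not_ge (hθ hki))
    have := Finset.card_le_card hcard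
    rw [Fin.card_Iio] at this
    rw [cdf_paramDistOne hm, le_div_iff₀ hm'] at hy
    have : (#{i | θ i ≤ y} : ℝ) ≤ quantileIndex m t := by exact_mod_cast this
    linarith

lemma winf_paramDistOne_le {m : ℕ} (hm : 0 < m) {θ θ' : Fin m → ℝ} (hθ : Monotone θ)
    (hθ' : Monotone θ') :
    winf (paramDistOne θ) (paramDistOne θ') ≤ ⨆ i, ENNReal.ofReal |θ i - θ' i| := by
  refine iSup_le fun ⟨t, ht⟩ => ?_
  rw [invCDF_paramDistOne hm hθ ht, invCDF_paramDistOne hm hθ' ht]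
  exact le_iSup (fun i => ENNReal.ofReal |θ i - θ' i|) _

end Atoms

lemma ofReal_abs_interp_sub_le_winf (ν ν' : Measure ℝ) {τ l : ℝ} (hτ : τ ∈ Ioo 0 1)
    (hl : l ∈ Icc 0 1) :
    ENNReal.ofReal |((1 - l) * invCDF ν τ + l * upInvCDF ν τ)
      - ((1 - l) * invCDF ν' τ + l * upInvCDF ν' τ)| ≤ winf ν ν' := by
  rcases eq_or_ne (winf ν ν') ⊤ with htop | htop
  · exact htop ▸ le_top
  have hlow : ∀ s ∈ Ioo (0 : ℝ) 1, |invCDF ν s - invCDF ν' s| ≤ (winf ν ν').toReal :=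
    fun s hs => (ENNReal.ofReal_le_iff_le_toReal htop).1
      (le_iSup (fun t : Ioo (0 : ℝ) 1 => ENNReal.ofReal |invCDF ν t - invCDF ν' t|) ⟨s, hs⟩)
  rw [ENNReal.ofReal_le_iff_le_toReal htop]
  exact abs_interp_sub_interp_le hl (hlow τ hτ) (abs_upInvCDF_sub_le ν ν' hτ hlow)

theorem quantile_projection_nonexpansion_general
    {X : Type*} {m : ℕ} (hm : 0 < m)
    (lam : X → Fin m → ℝ) (hlam : lam ∈ unitCube X m)
    (η η' : X → Measure ℝ) :
    wbar (proj lam η) (proj lam η') ≤ wbar η η' := by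
  refine iSup_mono fun x => ?_
  have hsorted : ∀ ν : Measure ℝ, Monotone fun i =>
      (1 - lam x i) * invCDF ν (qlevel m i) + lam x i * upInvCDF ν (qlevel m i) :=
    fun ν => monotone_interp_invCDF_upInvCDF ν (qlevel_strictMono m) qlevel_mem_Ioo (hlam x)
  exact (winf_paramDistOne_le hm (hsorted (η x)) (hsorted (η' x))).trans <|
    iSup_le fun i => ofReal_abs_interp_sub_le_winf _ _ (qlevel_mem_Ioo i) (hlam x i)

/-- The quantile projection `Π^λ` is a non-expansion in `w̄_∞`. -/
theorem quantile_projection_nonexpansion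
    {X : Type*} [Fintype X] {m : ℕ} (hm : 0 < m)
    (lam : X → Fin m → ℝ) (hlam : lam ∈ unitCube X m)
    (η η' : X → Measure ℝ)
    (hη : ∀ x, IsProbabilityMeasure (η x)) (hη' : ∀ x, IsProbabilityMeasure (η' x)) :
    wbar (proj lam η) (proj lam η') ≤ wbar η η' :=
  quantile_projection_nonexpansion_general hm lam hlam η η'
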